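/- arXiv:math/0410504 — 5 statements merged into one kernel-verified Lean document; each statement's English description precedes it below -/
import Mathlib

section
/- Let T be an aperiodic Borel automorphism of a standard Borel space (X, 𝓑), let μ₁, …, μₖ be Borel probability measures on X, let ε > 0 and let n, m ≥ 2 be integers. Then there exist a countable family of pairwise disjoint Borel sets (B_j) and integers h_j > n + m such that the sets T^i(B_j), for 0 ≤ i < h_j and all j, are pairwise disjoint and their union is X, and for every l = 1, …, k one has μ_l( ⋃_j ( ⋃_{0 ≤ i < n} T^i(B_j) ∪ ⋃_{1 ≤ i ≤ m} T^{h_j − i}(B_j) ) ) < ε. (Rokhlin lemma: partition of X into T-towers of height greater than n + m whose first n and last m levels have total measure less than ε.) -/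
/-!
Fix `N` and choose a Borel *marker set* `C`: its points on a common orbit are more than `N`
apart, and every point of `X` is within distance `N` of `C` along its orbit. It is built greedily
from a countable cover of `X` by Borel `N`-separated sets, which exist because a countable
separating family distinguishes each `x` from its translates `T^t x`, `0 < |t| ≤ N`; these differ
from `x` by aperiodicity.

The translates `T^s C`, `0 ≤ s ≤ N`, are pairwise disjoint, so averaging over `s < L` gives a `t`
with `∑ₗ μₗ (⋃_{i < n+m} T^{t+i} C) ≤ (n + m) k / L < ε`. The towers are the return-time partition
of `D = T^{m+t} C` (a Kakutani skyscraper): their heights exceed `N`, and their first `n` and last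
`m` levels lie in the translates `T^i D`, `-m ≤ i < n`, that is, in that small union.
-/

open MeasureTheory Set
open scoped ENNReal

/-- `T` is a Borel automorphism: both `T` and its inverse are measurable. -/
def IsBorelAuto {X : Type*} [MeasurableSpace X] (T : Equiv.Perm X) : Prop :=
  Measurable T ∧ Measurable T.symm

/-- `T` is aperiodic: no point is periodic. -/
def IsAperiodic {X : Type*} (T : Equiv.Perm X) : Prop :=
  ∀ (x : X) (n : ℤ), n ≠ 0 → (T ^ n) x ≠ x

open Equiv Finset

def borelAut (X : Type*) [MeasurableSpace X] : Subgroup (Perm X) where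
  carrier := {T | IsBorelAuto T}
  one_mem' := ⟨measurable_id, measurable_id⟩
  mul_mem' hS hT := ⟨hS.1.comp hT.1, hT.2.comp hS.2⟩
  inv_mem' hT := ⟨hT.2, hT.1⟩

section Borel

variable {X : Type*} [MeasurableSpace X] {T : Perm X}

theorem IsBorelAuto.zpow (hT : IsBorelAuto T) (t : ℤ) : IsBorelAuto (T ^ t) :=
  (borelAut X).zpow_mem hT t

theorem IsBorelAuto.pow (hT : IsBorelAuto T) (k : ℕ) : IsBorelAuto (T ^ k) :=
  (borelAut X).pow_mem hT k

theorem IsBorelAuto.measurableSet_image (hT : IsBorelAuto T) {S : Set X} (hS : MeasurableSet S) :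
    MeasurableSet (T '' S) := by
  rw [T.image_eq_preimage_symm]
  exact hT.2 hS

end Borel

namespace Rokhlin

variable {X : Type*}

theorem pow_image_pow_image (T : Perm X) (i s : ℕ) (S : Set X) :
    (T ^ i) '' ((T ^ s) '' S) = (T ^ (i + s)) '' S := by
  rw [pow_add, Perm.coe_mul, image_comp]

def window (T : Perm X) (N : ℕ) (S : Set X) : Set X :=
  {x | ∃ t : ℤ, |t| ≤ N ∧ (T ^ t) x ∈ S}

def IsSeparated (T : Perm X) (N : ℕ) (S : Set X) : Prop :=
  ∀ x ∈ S, ∀ t : ℤ, |t| ≤ N → (T ^ t) x ∈ S → t = 0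

section Window

variable {T : Perm X} {N : ℕ} {S S' : Set X}

theorem subset_window : S ⊆ window T N S :=
  fun x hx => ⟨0, by simp, by simpa using hx⟩

theorem window_mono (h : S ⊆ S') : window T N S ⊆ window T N S' :=
  fun _ ⟨t, ht, hx⟩ => ⟨t, ht, h hx⟩

theorem measurableSet_window [MeasurableSpace X] (hT : IsBorelAuto T) (hS : MeasurableSet S) :
    MeasurableSet (window T N S) := by
  simp only [window, ofPred_exists]
  exact MeasurableSet.iUnion fun t =>
    (MeasurableSet.const _).inter ((hT.zpow t).1 hS)

theorem zpow_apply_mem_window {x : X} (t : ℤ) (ht : |t| ≤ N) (hx : x ∈ S) :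
    (T ^ t) x ∈ window T N S :=
  ⟨-t, by rwa [abs_neg], by rwa [← Perm.mul_apply, ← zpow_add, neg_add_cancel, zpow_zero,
    Perm.one_apply]⟩

theorem exists_pos_pow_apply_mem (hS : window T N S = univ) (x : X) :
    ∃ j : ℕ, 0 < j ∧ (T ^ j) x ∈ S := by
  obtain ⟨t, ht, hx⟩ : (T ^ (N + 1 : ℤ)) x ∈ window T N S := hS ▸ mem_univ _
  rw [← Perm.mul_apply, ← zpow_add] at hx
  rw [abs_le] at ht
  refine ⟨(t + (N + 1)).toNat, by omega, ?_⟩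
  rwa [← zpow_natCast, Int.toNat_of_nonneg (by omega)]

theorem exists_mem_pow_image (hS : window T N S = univ) (x : X) :
    ∃ i : ℕ, x ∈ (T ^ i) '' S := by
  obtain ⟨t, ht, hx⟩ : (T ^ (-N : ℤ)) x ∈ window T N S := hS ▸ mem_univ _
  rw [abs_le] at ht
  refine ⟨(N - t).toNat, _, hx, ?_⟩
  rw [← zpow_natCast, Int.toNat_of_nonneg (by omega), ← Perm.mul_apply, ← Perm.mul_apply,
    ← zpow_add, ← zpow_add]
  simp

theorem window_pow_image_eq_univ (hS : window T N S = univ) (k : ℕ) :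
    window T N ((T ^ k) '' S) = univ := by
  refine eq_univ_of_forall fun x => ?_
  obtain ⟨t, ht, hx⟩ : (T ^ k)⁻¹ x ∈ window T N S := hS ▸ mem_univ _
  refine ⟨t, ht, _, hx, ?_⟩
  rw [← zpow_natCast, Perm.zpow_apply_comm, zpow_natCast, Perm.coe_inv, apply_symm_apply]

namespace IsSeparated

theorem eq_of_zpow_apply_eq (hS : IsSeparated T N S) {a b : X} (ha : a ∈ S) (hb : b ∈ S)
    {s s' : ℤ} (hss' : |s - s'| ≤ N) (h : (T ^ s) a = (T ^ s') b) : s = s' := by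
  have hab : (T ^ (-s' + s)) a = b := by
    rw [zpow_add, Perm.mul_apply, h, zpow_neg, Perm.coe_inv, symm_apply_apply]
  have := hS a ha _ (by rwa [neg_add_eq_sub]) (hab ▸ hb)
  omega

theorem pairwiseDisjoint_pow_image (hS : IsSeparated T N S) {L : ℕ} (hL : L ≤ N + 1) :
    (Finset.range L : Set ℕ).PairwiseDisjoint fun s => (T ^ s) '' S := by
  intro s hs s' hs' hne
  simp only [coe_range, Set.mem_Iio] at hs hs'
  refine disjoint_left.2 ?_
  rintro _ ⟨a, ha, rfl⟩ ⟨b, hb, hab⟩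
  rw [← zpow_natCast, ← zpow_natCast T s] at hab
  exact hne (by exact_mod_cast (hS.eq_of_zpow_apply_eq hb ha (by rw [abs_le]; omega) hab).symm)

theorem pow_image (hS : IsSeparated T N S) (k : ℕ) : IsSeparated T N ((T ^ k) '' S) := by
  rintro _ ⟨a, ha, rfl⟩ t ht ⟨b, hb, hab⟩
  rw [← zpow_natCast, Perm.zpow_apply_comm] at hab
  exact hS a ha t ht ((T ^ (k : ℤ)).injective hab ▸ hb)

theorem union_diff_window (hS : IsSeparated T N S) (hS' : IsSeparated T N S') :
    IsSeparated T N (S ∪ (S' \ window T N S)) := by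
  rintro x (hx | ⟨hx, hxS⟩) t ht (hy | ⟨hy, hyS⟩)
  · exact hS x hx t ht hy
  · exact absurd (zpow_apply_mem_window t ht hx) hyS
  · exact absurd ⟨t, ht, hy⟩ hxS
  · exact hS' x hx t ht hy

theorem iUnion {S : ℕ → Set X} (hmono : Monotone S) (hS : ∀ i, IsSeparated T N (S i)) :
    IsSeparated T N (⋃ i, S i) := by
  simp only [IsSeparated, mem_iUnion]
  rintro x ⟨a, ha⟩ t ht ⟨b, hb⟩
  exact hS (max a b) x (hmono (le_max_left a b) ha) t ht (hmono (le_max_right a b) hb)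

end IsSeparated

end Window

section Markers

variable {T : Perm X} {N : ℕ}

def isolatedPart (T : Perm X) (N : ℕ) (W : Set X) : Set X :=
  {x ∈ W | ∀ t : ℤ, |t| ≤ N → (T ^ t) x ∈ W → t = 0}

theorem isSeparated_isolatedPart (W : Set X) : IsSeparated T N (isolatedPart T N W) :=
  fun _ hx t ht hy => hx.2 t ht hy.1

theorem measurableSet_isolatedPart [MeasurableSpace X] (hT : IsBorelAuto T) {W : Set X}
    (hW : MeasurableSet W) :
    MeasurableSet (isolatedPart T N W) := by
  refine hW.inter (measurableSet_setOfPred.2 (Measurable.forall fun t => ?_))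
  exact Measurable.imp measurable_const
    (Measurable.imp (measurableSet_setOfPred.1 ((hT.zpow t).1 hW)) measurable_const)

theorem exists_isSeparated_cover [MeasurableSpace X] [MeasurableSpace.CountablySeparated X]
    (hT : IsBorelAuto T) (hTa : IsAperiodic T) (N : ℕ) :
    ∃ M : ℕ → Set X, (∀ i, MeasurableSet (M i)) ∧ (∀ i, IsSeparated T N (M i)) ∧
      ∀ x, ∃ i, x ∈ M i := by
  obtain ⟨f, hf, hinj⟩ := MeasurableSpace.measurable_injection_nat_bool_of_countablySeparated X
  let W : Finset (ℕ × Bool) → Set X := fun s => {y | ∀ q ∈ s, f y q.1 = q.2}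
  have hW : ∀ s, MeasurableSet (W s) := fun s =>
    measurableSet_setOfPred.2 <| Measurable.forall fun q => Measurable.imp measurable_const <|
      measurableSet_setOfPred.1 ((measurable_pi_apply q.1).comp hf (measurableSet_singleton q.2))
  obtain ⟨g, hg⟩ := exists_surjective_nat (Finset (ℕ × Bool))
  refine ⟨fun i => isolatedPart T N (W (g i)), fun i => measurableSet_isolatedPart hT (hW _),
    fun i => isSeparated_isolatedPart _, fun x => ?_⟩
  have hsep : ∀ t : ℤ, ∃ p, t ≠ 0 → f ((T ^ t) x) p ≠ f x p := by
    intro t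
    by_cases ht : t = 0
    · exact ⟨0, fun h => absurd ht h⟩
    · obtain ⟨p, hp⟩ := Function.ne_iff.1 (hinj.ne (hTa x t ht))
      exact ⟨p, fun _ => hp⟩
  choose p hp using hsep
  obtain ⟨i, hi⟩ := hg ((Finset.Icc (-N : ℤ) N).image fun t => (p t, f x (p t)))
  refine ⟨i, ?_, fun t ht hxt => ?_⟩
  · intro q hq
    rw [hi] at hq
    obtain ⟨t, -, rfl⟩ := Finset.mem_image.1 hq
    rfl
  · by_contra h0
    refine hp t h0 (hxt (p t, f x (p t)) ?_)
    rw [hi]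
    exact mem_image_of_mem _ (Finset.mem_Icc.2 (abs_le.1 ht))

def greedyUnion (T : Perm X) (N : ℕ) (M : ℕ → Set X) : ℕ → Set X
  | 0 => ∅
  | i + 1 => greedyUnion T N M i ∪ (M i \ window T N (greedyUnion T N M i))

variable {M : ℕ → Set X}

theorem monotone_greedyUnion : Monotone (greedyUnion T N M) :=
  monotone_nat_of_le_succ fun _ => subset_union_left

theorem measurableSet_greedyUnion [MeasurableSpace X] (hT : IsBorelAuto T)
    (hM : ∀ i, MeasurableSet (M i)) (i : ℕ) :
    MeasurableSet (greedyUnion T N M i) := by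
  induction i with
  | zero => exact MeasurableSet.empty
  | succ i ih => exact ih.union ((hM i).diff (measurableSet_window hT ih))

theorem isSeparated_greedyUnion (hM : ∀ i, IsSeparated T N (M i)) (i : ℕ) :
    IsSeparated T N (greedyUnion T N M i) := by
  induction i with
  | zero => exact fun x hx => absurd hx (notMem_empty x)
  | succ i ih => exact ih.union_diff_window (hM i)

theorem subset_window_greedyUnion_succ (i : ℕ) :
    M i ⊆ window T N (greedyUnion T N M (i + 1)) := by
  intro x hx
  by_cases hxw : x ∈ window T N (greedyUnion T N M i)
  · exact window_mono (monotone_greedyUnion (Nat.le_succ i)) hxw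
  · exact subset_window (Or.inr ⟨hx, hxw⟩)

theorem exists_marker [MeasurableSpace X] [MeasurableSpace.CountablySeparated X]
    (hT : IsBorelAuto T) (hTa : IsAperiodic T) (N : ℕ) :
    ∃ C : Set X, MeasurableSet C ∧ IsSeparated T N C ∧ window T N C = univ := by
  obtain ⟨M, hM, hMsep, hcover⟩ := exists_isSeparated_cover hT hTa N
  refine ⟨⋃ i, greedyUnion T N M i, .iUnion (measurableSet_greedyUnion hT hM),
    .iUnion monotone_greedyUnion (isSeparated_greedyUnion hMsep), eq_univ_of_forall fun x => ?_⟩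
  obtain ⟨i, hi⟩ := hcover x
  exact window_mono (subset_iUnion _ (i + 1)) (subset_window_greedyUnion_succ i hi)

end Markers

theorem exists_mul_measure_biUnion_pow_image_le [MeasurableSpace X] {T : Perm X}
    (hT : IsBorelAuto T) (ν : Measure X) {C : Set X} (hC : MeasurableSet C) {L : ℕ} (hL : 0 < L)
    (hdisj : (Finset.range L : Set ℕ).PairwiseDisjoint fun s => (T ^ s) '' C) (p : ℕ) :
    ∃ t < L, L * ν (⋃ i ∈ Finset.range p, (T ^ (i + t)) '' C) ≤ p * ν univ := by
  have hsum : ∑ t ∈ range L, ν (⋃ i ∈ range p, (T ^ (i + t)) '' C) ≤ p * ν univ := calc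
    _ ≤ ∑ t ∈ range L, ∑ i ∈ range p, ν ((T ^ i) '' ((T ^ t) '' C)) := by
      simp only [pow_image_pow_image]
      exact sum_le_sum fun t _ => measure_biUnion_finset_le _ _
    _ = ∑ i ∈ range p, ν (⋃ t ∈ range L, (T ^ i) '' ((T ^ t) '' C)) := by
      rw [sum_comm]
      refine sum_congr rfl fun i _ => (measure_biUnion_finset ?_ fun t _ => ?_).symm
      · exact fun s hs s' hs' hne => (disjoint_image_iff (T ^ i).injective).2 (hdisj hs hs' hne)
      · exact (hT.pow i).measurableSet_image ((hT.pow t).measurableSet_image hC)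
    _ ≤ ∑ _i ∈ range p, ν univ := sum_le_sum fun _ _ => measure_mono (subset_univ _)
    _ = p * ν univ := by simp
  obtain ⟨t, ht, hle⟩ := ENNReal.exists_le_of_sum_le (nonempty_range_iff.2 hL.ne')
    (f := fun t => L * ν (⋃ i ∈ range p, (T ^ (i + t)) '' C)) (g := fun _ => p * ν univ)
    (by rw [← mul_sum, sum_const, card_range, nsmul_eq_mul]; gcongr)
  exact ⟨t, mem_range.1 ht, hle⟩

-- `0` when the forward orbit of `x` never meets `D`.
noncomputable def returnTime (T : Perm X) (D : Set X) (x : X) : ℕ :=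
  sInf {j | 0 < j ∧ (T ^ j) x ∈ D}

section ReturnTime

variable {T : Perm X} {D : Set X}

theorem returnTime_le {x : X} {j : ℕ} (hj : 0 < j) (hx : (T ^ j) x ∈ D) :
    returnTime T D x ≤ j :=
  Nat.sInf_le ⟨hj, hx⟩

theorem returnTime_pos_and_mem {x : X} (hx : ∃ j, 0 < j ∧ (T ^ j) x ∈ D) :
    0 < returnTime T D x ∧ (T ^ returnTime T D x) x ∈ D :=
  Nat.sInf_mem hx

theorem IsSeparated.lt_returnTime {N : ℕ} (hD : IsSeparated T N D) {x : X} (hxD : x ∈ D)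
    (hx : ∃ j, 0 < j ∧ (T ^ j) x ∈ D) : N < returnTime T D x := by
  obtain ⟨hpos, hmem⟩ := returnTime_pos_and_mem hx
  by_contra! hle
  rw [← zpow_natCast] at hmem
  have := hD x hxD _ (by rw [abs_le]; omega) hmem
  omega

theorem measurable_returnTime [MeasurableSpace X] (hT : IsBorelAuto T) (hD : MeasurableSet D)
    (hrec : ∀ x, ∃ j, 0 < j ∧ (T ^ j) x ∈ D) : Measurable (returnTime T D) := by
  classical
  have : returnTime T D = fun x => Nat.find (hrec x) :=
    funext fun x => (Nat.sInf_def (s := {j | 0 < j ∧ (T ^ j) x ∈ D}) (hrec x)).trans (by congr)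
  rw [this]
  exact measurable_find hrec fun j => (MeasurableSet.const _).inter ((hT.pow j).1 hD)

theorem eq_and_eq_of_pow_apply_eq {a b : X} (ha : a ∈ D) (hb : b ∈ D) {i i' : ℕ}
    (hi : i < returnTime T D a) (hi' : i' < returnTime T D b) (h : (T ^ i) a = (T ^ i') b) :
    i = i' ∧ a = b := by
  wlog hle : i ≤ i' generalizing a b i i'
  · obtain ⟨h1, h2⟩ := this hb ha hi' hi h.symm (by omega)
    exact ⟨h1.symm, h2.symm⟩
  have hab : a = (T ^ (i' - i)) b := by
    apply (T ^ i).injective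
    rw [h, ← Perm.mul_apply, ← pow_add, Nat.add_sub_cancel' hle]
  obtain rfl | hlt := hle.eq_or_lt
  · simpa using hab
  · have := returnTime_le (Nat.sub_pos_of_lt hlt) (hab ▸ ha)
    omega

theorem exists_eq_pow_apply_of_lt_returnTime (hrec : ∀ x, ∃ j, 0 < j ∧ (T ^ j) x ∈ D)
    {x : X} (hx : ∃ i : ℕ, x ∈ (T ^ i) '' D) :
    ∃ a ∈ D, ∃ i < returnTime T D a, (T ^ i) a = x := by
  classical
  obtain ⟨a, ha, hax⟩ := Nat.find_spec hx
  refine ⟨a, ha, Nat.find hx, ?_, hax⟩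
  by_contra! hle
  obtain ⟨hpos, hmem⟩ := returnTime_pos_and_mem (hrec a)
  refine Nat.find_min hx (m := Nat.find hx - returnTime T D a) (by omega) ⟨_, hmem, ?_⟩
  rw [← Perm.mul_apply, ← pow_add, Nat.sub_add_cancel hle, hax]

theorem exists_tower_partition [MeasurableSpace X] (hT : IsBorelAuto T) (hD : MeasurableSet D)
    (hrec : ∀ x, ∃ j, 0 < j ∧ (T ^ j) x ∈ D) (hback : ∀ x, ∃ i : ℕ, x ∈ (T ^ i) '' D)
    {H : ℕ} (hH : ∀ x ∈ D, H < returnTime T D x) :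
    ∃ (B : ℕ → Set X) (h : ℕ → ℕ),
      (∀ j, MeasurableSet (B j)) ∧
      (∀ j, H < h j) ∧
      (∀ j i j' i', i < h j → i' < h j' → (j, i) ≠ (j', i') →
        Disjoint ((⇑(T ^ i)) '' B j) ((⇑(T ^ i')) '' B j')) ∧
      (⋃ j, ⋃ i ∈ Finset.range (h j), (⇑(T ^ i)) '' B j) = Set.univ ∧
      ∀ j, B j ⊆ D ∧ (T ^ h j) '' B j ⊆ D := by
  refine ⟨fun j => D ∩ returnTime T D ⁻¹' {j + (H + 1)}, fun j => j + (H + 1),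
    fun j => hD.inter (measurable_returnTime hT hD hrec (measurableSet_singleton _)),
    fun j => by dsimp only; omega, ?_, ?_, fun j => ⟨inter_subset_left, ?_⟩⟩
  · intro j i j' i' hi hi' hne
    dsimp only at hi hi'
    refine disjoint_left.2 ?_
    rintro _ ⟨a, ⟨ha, hra⟩, rfl⟩ ⟨b, ⟨hb, hrb⟩, hba⟩
    rw [Set.mem_preimage, mem_singleton_iff] at hra hrb
    obtain ⟨rfl, rfl⟩ := eq_and_eq_of_pow_apply_eq hb ha (by omega) (by omega) hba
    exact hne (by rw [Prod.mk.injEq]; omega)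
  · refine eq_univ_of_forall fun x => ?_
    obtain ⟨a, ha, i, hi, rfl⟩ := exists_eq_pow_apply_of_lt_returnTime hrec (hback x)
    have := hH a ha
    simp only [mem_iUnion, Finset.mem_range]
    refine ⟨returnTime T D a - (H + 1), i, ?_, a, ⟨ha, ?_⟩, rfl⟩
    · omega
    · rw [Set.mem_preimage, mem_singleton_iff]
      omega
  · rintro _ ⟨a, ⟨ha, hra⟩, rfl⟩
    rw [Set.mem_preimage, mem_singleton_iff] at hra
    dsimp only
    rw [← hra]
    exact (returnTime_pos_and_mem (hrec a)).2

end ReturnTime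

theorem pow_sub_image_subset {T : Perm X} {B C : Set X} {h i a : ℕ} (hih : i ≤ h)
    (hB : (T ^ h) '' B ⊆ (T ^ (i + a)) '' C) : (T ^ (h - i)) '' B ⊆ (T ^ a) '' C := by
  rintro _ ⟨b, hb, rfl⟩
  obtain ⟨c, hc, hcb⟩ := hB ⟨b, hb, rfl⟩
  refine ⟨c, hc, (T ^ i).injective ?_⟩
  rw [← Perm.mul_apply, ← Perm.mul_apply, ← pow_add, ← pow_add, Nat.add_sub_cancel' hih, hcb]

theorem boundary_levels_subset {T : Perm X} {B C : Set X} {h n m t : ℕ} (hmh : m ≤ h)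
    (hB : B ⊆ (T ^ (m + t)) '' C) (hhB : (T ^ h) '' B ⊆ (T ^ (m + t)) '' C) :
    (⋃ i ∈ Finset.range n, (T ^ i) '' B) ∪ (⋃ i ∈ Finset.Icc 1 m, (T ^ (h - i)) '' B) ⊆
      ⋃ i ∈ Finset.range (n + m), (T ^ (i + t)) '' C := by
  refine union_subset (iUnion₂_subset fun i hi => ?_) (iUnion₂_subset fun i hi => ?_)
  · rw [Finset.mem_range] at hi
    refine subset_biUnion_of_mem (u := fun i => (T ^ (i + t)) '' C)
      (Finset.mem_range.2 (by omega : i + m < n + m)) |>.trans' ?_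
    calc (T ^ i) '' B ⊆ (T ^ i) '' ((T ^ (m + t)) '' C) := image_mono hB
      _ = (T ^ (i + m + t)) '' C := by rw [pow_image_pow_image, add_assoc]
  · rw [Finset.mem_Icc] at hi
    refine subset_biUnion_of_mem (u := fun i => (T ^ (i + t)) '' C)
      (Finset.mem_range.2 (by omega : m - i < n + m)) |>.trans' ?_
    exact pow_sub_image_subset (by omega) (by rwa [← add_assoc, Nat.add_sub_cancel' hi.2])

end Rokhlin

open Rokhlin

theorem rokhlin_lemma_general {X : Type*} [MeasurableSpace X] [StandardBorelSpace X]
    (T : Equiv.Perm X) (hT : IsBorelAuto T) (hTa : IsAperiodic T)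
    (k : ℕ) (μ : Fin k → Measure X) (hμ : ∀ l, IsProbabilityMeasure (μ l))
    (ε : ℝ≥0∞) (hε : 0 < ε) (n m : ℕ) :
    ∃ (B : ℕ → Set X) (h : ℕ → ℕ),
      (∀ j, MeasurableSet (B j)) ∧
      (∀ j, n + m < h j) ∧
      (∀ j i j' i', i < h j → i' < h j' → (j, i) ≠ (j', i') →
        Disjoint ((⇑(T ^ i)) '' B j) ((⇑(T ^ i')) '' B j')) ∧
      (⋃ j, ⋃ i ∈ Finset.range (h j), (⇑(T ^ i)) '' B j) = Set.univ ∧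
      ∀ l, μ l (⋃ j, ((⋃ i ∈ Finset.range n, (⇑(T ^ i)) '' B j) ∪
          (⋃ i ∈ Finset.Icc 1 m, (⇑(T ^ (h j - i))) '' B j))) < ε := by
  set ν : Measure X := Measure.sum μ
  have hν : ν Set.univ ≠ ∞ := by simp [ν]
  obtain ⟨L, hL⟩ :=
    ENNReal.exists_nat_mul_gt hε.ne' (ENNReal.mul_ne_top (ENNReal.natCast_ne_top (n + m)) hν)
  have hL0 : 0 < L := Nat.pos_of_ne_zero fun h => by simp [h] at hL
  obtain ⟨C, hC, hCsep, hCwin⟩ := exists_marker hT hTa (L + n + m)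
  obtain ⟨t, -, ht⟩ := exists_mul_measure_biUnion_pow_image_le hT ν hC hL0
    (hCsep.pairwiseDisjoint_pow_image (by omega)) (n + m)
  set D := (T ^ (m + t)) '' C
  have hDwin : window T (L + n + m) D = Set.univ := window_pow_image_eq_univ hCwin _
  obtain ⟨B, h, hB, hh, hdisj, hcov, hBD⟩ := exists_tower_partition hT
    ((hT.pow _).measurableSet_image hC) (exists_pos_pow_apply_mem hDwin)
    (exists_mem_pow_image hDwin) fun x hx =>
      (hCsep.pow_image _).lt_returnTime hx (exists_pos_pow_apply_mem hDwin x)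
  refine ⟨B, h, hB, fun j => by have := hh j; omega, hdisj, hcov, fun l => ?_⟩
  have hbad : ν (⋃ i ∈ Finset.range (n + m), (T ^ (i + t)) '' C) < ε :=
    (ENNReal.mul_lt_mul_iff_right (by exact_mod_cast hL0.ne') (ENNReal.natCast_ne_top L)).1
      (ht.trans_lt hL)
  refine lt_of_le_of_lt ?_ hbad
  refine (measure_mono (iUnion_subset fun j => ?_)).trans (Measure.le_sum μ l _)
  exact boundary_levels_subset (by have := hh j; omega) (hBD j).1 (hBD j).2

/-- Rokhlin lemma: partition of `X` into `T`-towers of height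
greater than `n + m` whose first `n` and last `m` levels have small measure. -/
theorem rokhlin_lemma {X : Type*} [MeasurableSpace X] [StandardBorelSpace X]
    (T : Equiv.Perm X) (hT : IsBorelAuto T) (hTa : IsAperiodic T)
    (k : ℕ) (μ : Fin k → Measure X) (hμ : ∀ l, IsProbabilityMeasure (μ l))
    (ε : ℝ≥0∞) (hε : 0 < ε) (n m : ℕ) (hn : 2 ≤ n) (hm : 2 ≤ m) :
    ∃ (B : ℕ → Set X) (h : ℕ → ℕ),
      (∀ j, MeasurableSet (B j)) ∧
      (∀ j, n + m < h j) ∧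
      (∀ j i j' i', i < h j → i' < h j' → (j, i) ≠ (j', i') →
        Disjoint ((⇑(T ^ i)) '' B j) ((⇑(T ^ i')) '' B j')) ∧
      (⋃ j, ⋃ i ∈ Finset.range (h j), (⇑(T ^ i)) '' B j) = Set.univ ∧
      ∀ l, μ l (⋃ j, ((⋃ i ∈ Finset.range n, (⇑(T ^ i)) '' B j) ∪
          (⋃ i ∈ Finset.Icc 1 m, (⇑(T ^ (h j - i))) '' B j))) < ε :=
  rokhlin_lemma_general T hT hTa k μ hμ ε hε n m
end

section
/- Let S be a Borel automorphism of a standard Borel space (X, 𝓑) whose support {x ∈ X : Sx ≠ x} is uncountable. Then there exist a non-atomic Borel probability measure ν on X and ε > 0 such that every Borel automorphism R of X with ν(E(R,S)) < ε has uncountable support. (The group Ctbl(X) of automorphisms with countable support is closed in the uniform topology τ.) -/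
/-!
Since `S` is Borel, its support `A` is an uncountable Borel set, hence Borel isomorphic to `ℝ`;
pushing Lebesgue measure on `[0, 1]` forward along such an isomorphism gives a non-atomic
probability measure `ν` with `ν A = 1`. If `R` has countable support, then `R` and `S` differ at
every point of `A` outside that countable `ν`-null set, so `ν (E(R, S)) ≥ 1`, and `ε = 1` works.
-/

open MeasureTheory Set
open scoped ENNReal

/-- The set on which `S` and `T` (or their inverses) differ. -/
def Eset {X : Type*} (S T : Equiv.Perm X) : Set X :=
  {x | S x ≠ T x} ∪ {x | S⁻¹ x ≠ T⁻¹ x}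

open scoped unitInterval

lemma measurableSet_setOf_apply_ne_self {X : Type*} [MeasurableSpace X] [MeasurableEq X]
    {f : X → X} (hf : Measurable f) : MeasurableSet {x | f x ≠ x} :=
  (measurableSet_eq_fun hf measurable_id).compl

lemma MeasureTheory.Measure.nullSingletonClass_map_of_injective {α β : Type*}
    [MeasurableSpace α] [MeasurableSpace β] [MeasurableSingletonClass β] {f : α → β}
    (hf : Measurable f) (hinj : Function.Injective f) (μ : Measure α) [NullSingletonClass μ] :
    NullSingletonClass (μ.map f) where
  measure_singleton y := by
    rw [Measure.map_apply hf (measurableSet_singleton y)]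
    have h : (f ⁻¹' {y}).Subsingleton := fun _ ha _ hb => hinj (ha.trans hb.symm)
    exact h.measure_zero μ

lemma exists_isProbabilityMeasure_nullSingletonClass_measure_eq_one {X : Type*}
    [MeasurableSpace X] [StandardBorelSpace X] {A : Set X} (hA : MeasurableSet A)
    (hA_unc : ¬ A.Countable) :
    ∃ ν : Measure X, IsProbabilityMeasure ν ∧ NullSingletonClass ν ∧ ν A = 1 := by
  have : StandardBorelSpace A := hA.standardBorel
  let e : ℝ ≃ᵐ A := PolishSpace.measurableEquivOfNotCountable not_countable
    (by rwa [countable_coe_iff])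
  let f : I → X := Subtype.val ∘ e ∘ Subtype.val
  have hf : Measurable f := measurable_subtype_coe.comp (e.measurable.comp measurable_subtype_coe)
  have hf_inj : Function.Injective f :=
    Subtype.val_injective.comp (e.injective.comp Subtype.val_injective)
  refine ⟨volume.map f, Measure.isProbabilityMeasure_map hf.aemeasurable,
    Measure.nullSingletonClass_map_of_injective hf hf_inj volume, ?_⟩
  rw [Measure.map_apply hf hA, show f ⁻¹' A = univ from eq_univ_of_forall fun t => (e t).2,
    measure_univ]

lemma setOf_apply_ne_self_diff_subset_Eset {X : Type*} (R S : Equiv.Perm X) :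
    {x | S x ≠ x} \ {x | R x ≠ x} ⊆ Eset R S := by
  rintro x ⟨hSx, hRx⟩
  refine Or.inl fun h => hSx ?_
  rw [← h]
  exact not_not.1 hRx

lemma measure_setOf_apply_ne_self_le_measure_Eset {X : Type*} [MeasurableSpace X]
    (ν : Measure X) [NullSingletonClass ν] {R : Equiv.Perm X} (S : Equiv.Perm X)
    (hR : {x | R x ≠ x}.Countable) :
    ν {x | S x ≠ x} ≤ ν (Eset R S) :=
  calc ν {x | S x ≠ x} = ν ({x | S x ≠ x} \ {x | R x ≠ x}) :=
        (measure_sdiff_null (hR.measure_zero ν)).symm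
    _ ≤ ν (Eset R S) := measure_mono (setOf_apply_ne_self_diff_subset_Eset R S)

/-- `Ctbl(X)` is closed in the uniform topology `τ`. -/
theorem ctbl_closed_uniform {X : Type*} [MeasurableSpace X] [StandardBorelSpace X]
    (S : Equiv.Perm X) (hS : IsBorelAuto S)
    (hsupp : ¬ {x : X | S x ≠ x}.Countable) :
    ∃ ν : Measure X, IsProbabilityMeasure ν ∧ (∀ x : X, ν {x} = 0) ∧
      ∃ ε : ℝ≥0∞, 0 < ε ∧
        ∀ R : Equiv.Perm X, IsBorelAuto R → ν (Eset R S) < ε →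
          ¬ {x : X | R x ≠ x}.Countable := by
  obtain ⟨ν, hν_prob, hν_atoms, hν_supp⟩ :=
    exists_isProbabilityMeasure_nullSingletonClass_measure_eq_one
      (measurableSet_setOf_apply_ne_self hS.1) hsupp
  refine ⟨ν, hν_prob, measure_singleton, 1, one_pos, fun R _ hlt hR => ?_⟩
  exact not_le.2 hlt (hν_supp ▸ measure_setOf_apply_ne_self_le_measure_Eset ν S hR)
end

section
/- Let S be a Borel automorphism of a standard Borel space (X, 𝓑) whose support {x ∈ X : Sx ≠ x} is uncountable. Then there exists an uncountable Borel set E₁ ⊆ X with S(E₁) ∩ E₁ = ∅ such that every Borel automorphism R of X with R(E₁) = S(E₁) has uncountable support. (The group Ctbl(X) of automorphisms with countable support is closed in the weak topology p.) -/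
open MeasureTheory Set

/-- Auxiliary: if `E` is disjoint from `S '' E` and `R '' E = S '' E`, then the support
of `R` contains `E`. -/
lemma support_superset_aux {X : Type*} (S R : Equiv.Perm X) (E : Set X)
    (hdisj : (⇑S) '' E ∩ E = ∅) (hRE : (⇑R) '' E = (⇑S) '' E) :
    E ⊆ {x : X | R x ≠ x} := by
  intro x hx hfix
  have hmem : R x ∈ (⇑S) '' E := hRE ▸ Set.mem_image_of_mem _ hx
  have : R x ∈ ((⇑S) '' E) ∩ E := ⟨hmem, hfix.symm ▸ hx⟩
  simp [hdisj] at this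

/-- `Ctbl(X)` is closed in the weak topology `p`. -/
theorem ctbl_closed_weak {X : Type*} [MeasurableSpace X] [StandardBorelSpace X]
    (S : Equiv.Perm X) (hS : IsBorelAuto S)
    (hsupp : ¬ {x : X | S x ≠ x}.Countable) :
    ∃ E₁ : Set X, MeasurableSet E₁ ∧ ¬ E₁.Countable ∧
      (⇑S) '' E₁ ∩ E₁ = ∅ ∧
      ∀ R : Equiv.Perm X, IsBorelAuto R → (⇑R) '' E₁ = (⇑S) '' E₁ →
        ¬ {x : X | R x ≠ x}.Countable := by
  obtain ⟨f, hf⟩ : ∃ f : X → ℝ, MeasurableEmbedding f :=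
    ⟨MeasureTheory.embeddingReal X, MeasureTheory.measurableEmbedding_embeddingReal X⟩
  set B : ℚ → Set X := fun q => {x | f x < q ∧ (q : ℝ) ≤ f (S x)} with hB
  set B' : ℚ → Set X := fun q => {x | f (S x) < q ∧ (q : ℝ) ≤ f x} with hB'
  -- the support is covered by the B q and B' q
  have hcover : {x : X | S x ≠ x} ⊆ ⋃ q : ℚ, (B q ∪ B' q) := by
    intro x hx
    have hne : f (S x) ≠ f x := fun h => hx (hf.injective h)
    rcases lt_or_gt_of_ne hne with h | h
    · obtain ⟨q, hq1, hq2⟩ := exists_rat_btwn h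
      exact Set.mem_iUnion.2 ⟨q, Or.inr ⟨hq1, hq2.le⟩⟩
    · obtain ⟨q, hq1, hq2⟩ := exists_rat_btwn h
      exact Set.mem_iUnion.2 ⟨q, Or.inl ⟨hq1, hq2.le⟩⟩
  -- some piece is uncountable
  have : ∃ q : ℚ, ¬ (B q).Countable ∨ ¬ (B' q).Countable := by
    by_contra h
    push_neg at h
    exact hsupp ((Set.countable_iUnion fun q =>
      ((h q).1.union (h q).2)).mono hcover)
  obtain ⟨q, hq⟩ := this
  have hmB : MeasurableSet (B q) :=
    ((measurableSet_lt hf.measurable measurable_const).inter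
      (measurableSet_le measurable_const (hf.measurable.comp hS.1)))
  have hmB' : MeasurableSet (B' q) :=
    ((measurableSet_lt (hf.measurable.comp hS.1) measurable_const).inter
      (measurableSet_le measurable_const hf.measurable))
  have hdB : (⇑S) '' (B q) ∩ (B q) = ∅ := by
    ext y
    simp only [Set.mem_inter_iff, Set.mem_image, Set.mem_empty_iff_false, iff_false, not_and]
    rintro ⟨x, hx, rfl⟩ hy
    exact absurd hy.1 (not_lt.2 hx.2)
  have hdB' : (⇑S) '' (B' q) ∩ (B' q) = ∅ := by
    ext y
    simp only [Set.mem_inter_iff, Set.mem_image, Set.mem_empty_iff_false, iff_false, not_and]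
    rintro ⟨x, hx, rfl⟩ hy
    exact absurd hy.2 (not_le.2 hx.1)
  rcases hq with hq | hq
  · exact ⟨B q, hmB, hq, hdB, fun R _ hRE h =>
      hq (h.mono (support_superset_aux S R _ hdB hRE))⟩
  · exact ⟨B' q, hmB', hq, hdB', fun R _ hRE h =>
      hq (h.mono (support_superset_aux S R _ hdB' hRE))⟩
end

section
/- Let T be a Borel automorphism of an uncountable standard Borel space (X, 𝓑), let μ₁, …, μₙ be Borel probability measures on X and let ε > 0. Then there exist non-atomic Borel probability measures ν₁, …, νₙ on X such that for every Borel automorphism S of X with νᵢ(E(S,T)) < ε for all i = 1, …, n, there exists a Borel automorphism S₁ of X with {x ∈ X : S₁x ≠ Sx} countable and μᵢ(E(S₁,T)) < ε for all i = 1, …, n. (The quotient uniform topology τ₀ on Aut₀(X, 𝓑) = Aut(X, 𝓑)/Ctbl(X) is generated by neighborhoods defined by non-atomic measures.) -/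
open MeasureTheory Set
open scoped ENNReal

/-!
The atoms of the `μ i` form a countable set `A`; let `ν i` be `μ i` with its mass on `A` moved
onto a fixed non-atomic probability measure. Given `S`, enlarge `A` to a countable set `D`
invariant under `S` and `T`, and let `S₁` be `T` on `D` and `S` off `D`. Then `S₁` differs from
`S` only on the countable set `D`, and `E(S₁, T) ⊆ E(S, T) \ A`, a set on which `μ i` is
dominated by `ν i`.
-/

lemma Set.Countable.exists_countable_superset_invariant {G α : Type*} [Group G] [Countable G]
    (φ : G →* Equiv.Perm α) {A : Set α} (hA : A.Countable) :
    ∃ D : Set α, D.Countable ∧ A ⊆ D ∧ ∀ g x, φ g x ∈ D ↔ x ∈ D := by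
  refine ⟨⋃ g, φ g ⁻¹' A, countable_iUnion fun g => hA.preimage (φ g).injective,
    fun x hx => mem_iUnion.2 ⟨1, by simpa using hx⟩, fun g x => ?_⟩
  simp only [mem_iUnion, mem_preimage]
  constructor
  · rintro ⟨h, hh⟩
    exact ⟨h * g, by simpa using hh⟩
  · rintro ⟨h, hh⟩
    exact ⟨h * g⁻¹, by simpa using hh⟩

namespace Equiv.Perm

variable {α : Type*} (D : Set α) [DecidablePred (· ∈ D)] (T S : Perm α)
  (hT : ∀ x, T x ∈ D ↔ x ∈ D) (hS : ∀ x, S x ∈ D ↔ x ∈ D)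

def piecewise : Perm α :=
  subtypeCongr (T.subtypePerm hT) (S.subtypePerm fun x => not_congr (hS x))

@[simp]
lemma coe_piecewise : ⇑(piecewise D T S hT hS) = D.piecewise T S := by
  ext x
  by_cases hx : x ∈ D <;> simp [piecewise, hx]

@[simp]
lemma coe_piecewise_symm : ⇑(piecewise D T S hT hS).symm = D.piecewise ⇑T.symm ⇑S.symm := by
  ext x
  by_cases hx : x ∈ D <;> simp [piecewise, subtypeCongr.symm, hx] <;> rfl

lemma setOf_piecewise_apply_ne_subset : {x | piecewise D T S hT hS x ≠ S x} ⊆ D := by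
  intro x hx
  by_contra hxD
  simp [hxD] at hx

lemma Eset_piecewise_subset : Eset (piecewise D T S hT hS) T ⊆ Eset S T ∩ Dᶜ := by
  intro x hx
  by_cases hxD : x ∈ D
  · simp [Eset, hxD] at hx
  · simpa [Eset, hxD] using hx

end Equiv.Perm

lemma IsBorelAuto.piecewise {X : Type*} [MeasurableSpace X] {D : Set X} [DecidablePred (· ∈ D)]
    (hD : MeasurableSet D) {T S : Equiv.Perm X} (hT : IsBorelAuto T) (hS : IsBorelAuto S)
    (hTD : ∀ x, T x ∈ D ↔ x ∈ D) (hSD : ∀ x, S x ∈ D ↔ x ∈ D) :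
    IsBorelAuto (Equiv.Perm.piecewise D T S hTD hSD) :=
  ⟨by simpa using hT.1.piecewise hD hS.1, by simpa using hT.2.piecewise hD hS.2⟩

instance MeasurableEquiv.nullSingletonClass_map {α β : Type*} [MeasurableSpace α]
    [MeasurableSpace β] (e : α ≃ᵐ β) (μ : Measure α) [NullSingletonClass μ] :
    NullSingletonClass (μ.map e) :=
  ⟨fun y => by rw [e.map_apply]; exact (subsingleton_singleton.preimage e.injective).measure_zero μ⟩

lemma exists_isProbabilityMeasure_nullSingletonClass (X : Type*) [MeasurableSpace X]
    [StandardBorelSpace X] [Uncountable X] :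
    ∃ ρ : Measure X, IsProbabilityMeasure ρ ∧ NullSingletonClass ρ := by
  let e : ℝ ≃ᵐ X := PolishSpace.measurableEquivOfNotCountable not_countable not_countable
  have : IsProbabilityMeasure (volume.restrict (Icc (0 : ℝ) 1)) := ⟨by simp⟩
  exact ⟨(volume.restrict (Icc (0 : ℝ) 1)).map e,
    Measure.isProbabilityMeasure_map e.measurable.aemeasurable, inferInstance⟩

namespace MeasureTheory.Measure

variable {α : Type*} [MeasurableSpace α] (μ : Measure α)

lemma countable_setOf_measure_singleton_pos [MeasurableSingletonClass α] [SFinite μ] :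
    {x | 0 < μ {x}}.Countable :=
  countable_meas_level_set_pos measurable_id

noncomputable def spreadOn (A : Set α) (ρ : Measure α) : Measure α :=
  μ.restrict Aᶜ + μ A • ρ

variable {A : Set α} (ρ : Measure α)

lemma isProbabilityMeasure_spreadOn [IsProbabilityMeasure μ] [IsProbabilityMeasure ρ]
    (hA : MeasurableSet A) : IsProbabilityMeasure (μ.spreadOn A ρ) := by
  constructor
  rw [spreadOn, add_apply, smul_apply, restrict_apply MeasurableSet.univ, univ_inter,
    measure_univ, smul_eq_mul, mul_one, add_comm, measure_add_measure_compl hA, measure_univ]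

lemma nullSingletonClass_spreadOn [NullSingletonClass ρ] (hA : MeasurableSet A)
    (h_atoms : ∀ x, 0 < μ {x} → x ∈ A) : NullSingletonClass (μ.spreadOn A ρ) := by
  refine ⟨fun x => ?_⟩
  rw [spreadOn, add_apply, smul_apply, measure_singleton (μ := ρ), smul_zero, add_zero,
    restrict_apply' hA.compl]
  by_cases hx : x ∈ A
  · simp [hx]
  · exact measure_mono_null inter_subset_left
      (not_lt.1 (mt (h_atoms x) hx) |>.antisymm zero_le)

lemma measure_inter_compl_le_spreadOn (hA : MeasurableSet A) (s : Set α) :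
    μ (s ∩ Aᶜ) ≤ μ.spreadOn A ρ s := by
  rw [spreadOn, add_apply, restrict_apply' hA.compl]
  exact le_self_add

end MeasureTheory.Measure

theorem quotient_uniform_nonatomic_base_general {X : Type*} [MeasurableSpace X]
    [StandardBorelSpace X] [Uncountable X]
    (T : Equiv.Perm X) (hT : IsBorelAuto T)
    (n : ℕ) (μ : Fin n → Measure X) (hμ : ∀ i, IsProbabilityMeasure (μ i)) (ε : ℝ≥0∞) :
    ∃ ν : Fin n → Measure X,
      (∀ i, IsProbabilityMeasure (ν i)) ∧ (∀ i (x : X), ν i {x} = 0) ∧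
      ∀ S : Equiv.Perm X, IsBorelAuto S → (∀ i, ν i (Eset S T) < ε) →
        ∃ S₁ : Equiv.Perm X, IsBorelAuto S₁ ∧ {x : X | S₁ x ≠ S x}.Countable ∧
          ∀ i, μ i (Eset S₁ T) < ε := by
  classical
  obtain ⟨ρ, hρ, hρ_atoms⟩ := exists_isProbabilityMeasure_nullSingletonClass X
  let A := ⋃ i, {x | 0 < μ i {x}}
  have hA : A.Countable :=
    countable_iUnion fun i => Measure.countable_setOf_measure_singleton_pos (μ i)
  refine ⟨fun i => (μ i).spreadOn A ρ,
    fun i => (μ i).isProbabilityMeasure_spreadOn ρ hA.measurableSet,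
    fun i => ((μ i).nullSingletonClass_spreadOn ρ hA.measurableSet
      fun x hx => mem_iUnion.2 ⟨i, hx⟩).measure_singleton, fun S hS hν => ?_⟩
  obtain ⟨D, hD, hAD, hD_inv⟩ := hA.exists_countable_superset_invariant (FreeGroup.lift ![S, T])
  have hSD : ∀ x, S x ∈ D ↔ x ∈ D := by simpa using hD_inv (.of 0)
  have hTD : ∀ x, T x ∈ D ↔ x ∈ D := by simpa using hD_inv (.of 1)
  set S₁ := Equiv.Perm.piecewise D T S hTD hSD
  refine ⟨S₁, hT.piecewise hD.measurableSet hS hTD hSD,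
    hD.mono (Equiv.Perm.setOf_piecewise_apply_ne_subset ..), fun i => ?_⟩
  calc μ i (Eset S₁ T) ≤ μ i (Eset S T ∩ Aᶜ) :=
        measure_mono <| (Equiv.Perm.Eset_piecewise_subset ..).trans <|
          inter_subset_inter_right _ (compl_subset_compl.2 hAD)
    _ ≤ (μ i).spreadOn A ρ (Eset S T) :=
        (μ i).measure_inter_compl_le_spreadOn ρ hA.measurableSet _
    _ < ε := hν i

/-- the quotient uniform topology `τ₀` is generated by
neighborhoods defined by non-atomic measures. -/
theorem quotient_uniform_nonatomic_base {X : Type*} [MeasurableSpace X]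
    [StandardBorelSpace X] [Uncountable X]
    (T : Equiv.Perm X) (hT : IsBorelAuto T)
    (n : ℕ) (μ : Fin n → Measure X) (hμ : ∀ i, IsProbabilityMeasure (μ i))
    (ε : ℝ≥0∞) (hε : 0 < ε) :
    ∃ ν : Fin n → Measure X,
      (∀ i, IsProbabilityMeasure (ν i)) ∧ (∀ i (x : X), ν i {x} = 0) ∧
      ∀ S : Equiv.Perm X, IsBorelAuto S → (∀ i, ν i (Eset S T) < ε) →
        ∃ S₁ : Equiv.Perm X, IsBorelAuto S₁ ∧ {x : X | S₁ x ≠ S x}.Countable ∧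
          ∀ i, μ i (Eset S₁ T) < ε :=
  quotient_uniform_nonatomic_base_general T hT n μ hμ ε
end

section
/- Let S₁ and S₂ be aperiodic smooth Borel automorphisms of an uncountable standard Borel space (X, 𝓑). Then S₁ and S₂ are conjugate in Aut(X, 𝓑): there exists a Borel automorphism T of X such that S₂ = T⁻¹ ∘ S₁ ∘ T. -/
open MeasureTheory Set

/-- `T` is smooth: some Borel set meets every `T`-orbit in exactly one point. -/
def IsSmooth {X : Type*} [MeasurableSpace X] (T : Equiv.Perm X) : Prop :=
  ∃ A : Set X, MeasurableSet A ∧ ∀ x : X, ∃! a, a ∈ A ∧ ∃ n : ℤ, (T ^ n) x = a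

lemma perm_zpow_apply_apply {X : Type*} (S : Equiv.Perm X) (m n : ℤ) (x : X) :
    (S ^ m) ((S ^ n) x) = (S ^ (m + n)) x := by
  rw [← Equiv.Perm.mul_apply, ← zpow_add]

lemma measurable_perm_pow {X : Type*} [MeasurableSpace X] {S : Equiv.Perm X}
    (h : Measurable S) (n : ℕ) : Measurable ⇑(S ^ n) := by
  induction n with
  | zero => simpa using measurable_id
  | succ n ih =>
      rw [pow_succ, Equiv.Perm.coe_mul]
      exact ih.comp h

lemma measurable_perm_zpow {X : Type*} [MeasurableSpace X] {S : Equiv.Perm X}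
    (h : IsBorelAuto S) (n : ℤ) : Measurable ⇑(S ^ n) := by
  cases n with
  | ofNat m =>
      rw [Int.ofNat_eq_coe, zpow_natCast]
      exact measurable_perm_pow h.1 m
  | negSucc m =>
      rw [zpow_negSucc, ← inv_pow]
      exact measurable_perm_pow (S := S⁻¹) h.2 (m + 1)

/-- Main structural lemma: an aperiodic smooth Borel automorphism is isomorphic
to the shift on `A × ℤ` for a transversal `A`. -/
lemma exists_shift_model {X : Type*} [MeasurableSpace X] [StandardBorelSpace X]
    [Uncountable X] (S : Equiv.Perm X) (hS : IsBorelAuto S) (hSa : IsAperiodic S)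
    (hSs : IsSmooth S) :
    ∃ A : Set X, MeasurableSet A ∧ ¬ Countable A ∧
      ∃ e : X ≃ᵐ (A × ℤ), ∀ x : X, e (S x) = ((e x).1, (e x).2 - 1) := by
  obtain ⟨A, hA, hAu⟩ := hSs
  -- the combined uniqueness
  have key : ∀ x : X, ∃ p : A × ℤ, (S ^ p.2) x = ↑p.1 ∧
      ∀ q : A × ℤ, (S ^ q.2) x = ↑q.1 → q = p := by
    intro x
    obtain ⟨a, ⟨haA, n, hn⟩, huniq⟩ := hAu x
    refine ⟨(⟨a, haA⟩, n), hn, ?_⟩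
    rintro ⟨⟨b, hbB⟩, m⟩ hq
    simp only at hq
    have hba : b = a := huniq b ⟨hbB, m, hq⟩
    subst hba
    have hmn : m = n := by
      by_contra hne
      have : (S ^ (m - n)) ((S ^ n) x) = (S ^ n) x := by
        rw [perm_zpow_apply_apply, sub_add_cancel, hq, hn]
      exact hSa ((S ^ n) x) (m - n) (sub_ne_zero.mpr hne) this
    simp [hmn]
  choose f hf hfu using key
  -- the equivalence
  have left_inv : ∀ x : X, (S ^ (-(f x).2)) ↑(f x).1 = x := by
    intro x
    rw [← hf x, perm_zpow_apply_apply, neg_add_cancel, zpow_zero]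
    rfl
  have right_inv : ∀ p : A × ℤ, f ((S ^ (-p.2)) ↑p.1) = p := by
    intro p
    refine (hfu _ p ?_).symm
    rw [perm_zpow_apply_apply, add_neg_cancel, zpow_zero]
    rfl
  let e : X ≃ A × ℤ :=
    { toFun := f
      invFun := fun p => (S ^ (-p.2)) ↑p.1
      left_inv := left_inv
      right_inv := right_inv }
  haveI : StandardBorelSpace A := hA.standardBorel
  have hg : Measurable ⇑e.symm := by
    apply measurable_from_prod_countable_left (f := fun p : A × ℤ => (S ^ (-p.2)) (↑p.1 : X))
    intro n
    exact (measurable_perm_zpow hS (-n)).comp measurable_subtype_coe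
  have hemb : MeasurableEmbedding ⇑e.symm := hg.measurableEmbedding e.symm.injective
  have he : Measurable ⇑e := by
    have : Measurable (⇑e.symm ∘ ⇑e) := by
      have : ⇑e.symm ∘ ⇑e = id := by funext x; simp
      rw [this]; exact measurable_id
    exact hemb.measurable_comp_iff.mp this
  have hAc : ¬ Countable A := by
    intro h
    haveI : Countable (A × ℤ) := inferInstance
    haveI : Countable X := Countable.of_equiv _ e.symm
    exact not_countable ‹Countable X›
  refine ⟨A, hA, hAc, ⟨e, he, hg⟩, ?_⟩
  intro x
  show f (S x) = ((f x).1, (f x).2 - 1)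
  refine (hfu (S x) ((f x).1, (f x).2 - 1) ?_).symm
  show (S ^ ((f x).2 - 1)) (S x) = ↑(f x).1
  have h1 : S x = (S ^ (1 : ℤ)) x := by simp
  rw [h1, perm_zpow_apply_apply, sub_add_cancel]
  exact hf x

/-- any two aperiodic smooth Borel automorphisms of an
uncountable standard Borel space are conjugate. -/
theorem aperiodic_smooth_conjugate {X : Type*} [MeasurableSpace X]
    [StandardBorelSpace X] [Uncountable X]
    (S₁ S₂ : Equiv.Perm X) (hS₁ : IsBorelAuto S₁) (hS₂ : IsBorelAuto S₂)
    (hS₁a : IsAperiodic S₁) (hS₂a : IsAperiodic S₂)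
    (hS₁s : IsSmooth S₁) (hS₂s : IsSmooth S₂) :
    ∃ T : Equiv.Perm X, IsBorelAuto T ∧ S₂ = T⁻¹ * S₁ * T := by
  obtain ⟨A₁, hA₁, hA₁c, e₁, he₁⟩ := exists_shift_model S₁ hS₁ hS₁a hS₁s
  obtain ⟨A₂, hA₂, hA₂c, e₂, he₂⟩ := exists_shift_model S₂ hS₂ hS₂a hS₂s
  haveI : StandardBorelSpace A₁ := hA₁.standardBorel
  haveI : StandardBorelSpace A₂ := hA₂.standardBorel
  let ψ : A₁ ≃ᵐ A₂ := PolishSpace.measurableEquivOfNotCountable hA₁c hA₂c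
  let Φ : (A₂ × ℤ) ≃ᵐ (A₁ × ℤ) := ψ.symm.prodCongr (MeasurableEquiv.refl ℤ)
  let Tm : X ≃ᵐ X := e₂.trans (Φ.trans e₁.symm)
  refine ⟨Tm.toEquiv, ⟨Tm.measurable, Tm.symm.measurable⟩, ?_⟩
  -- key equivariance: Tm (S₂ x) = S₁ (Tm x)
  have key : ∀ x : X, Tm (S₂ x) = S₁ (Tm x) := by
    intro x
    have h2 : e₂ (S₂ x) = ((e₂ x).1, (e₂ x).2 - 1) := he₂ x
    have h1 : ∀ p : A₁ × ℤ, e₁.symm (p.1, p.2 - 1) = S₁ (e₁.symm p) := by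
      intro p
      have := he₁ (e₁.symm p)
      rw [e₁.apply_symm_apply] at this
      calc e₁.symm (p.1, p.2 - 1) = e₁.symm (e₁ (S₁ (e₁.symm p))) := by rw [this]
        _ = S₁ (e₁.symm p) := e₁.symm_apply_apply _
    show e₁.symm (Φ (e₂ (S₂ x))) = S₁ (e₁.symm (Φ (e₂ x)))
    rw [h2]
    have hΦ : Φ ((e₂ x).1, (e₂ x).2 - 1) = ((Φ (e₂ x)).1, (Φ (e₂ x)).2 - 1) := rfl
    rw [hΦ, h1]
  ext x
  have := key (S₂.symm ((Tm.toEquiv.symm) (S₁ (Tm x))))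
  -- simpler: show S₂ x = Tm.symm (S₁ (Tm x))
  show S₂ x = (Tm.toEquiv⁻¹ * S₁ * Tm.toEquiv) x
  simp only [Equiv.Perm.mul_apply]
  have : Tm.toEquiv⁻¹ = Tm.symm.toEquiv := rfl
  rw [this]
  show S₂ x = Tm.symm (S₁ (Tm x))
  rw [← key x]
  exact (Tm.symm_apply_apply _).symm
end
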